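/- Let Γ be a finite alphabet and let L ⊆ Γ* be upward-closed with respect to the subword order (i.e., u ∈ L and u ⊑ v imply v ∈ L). Then L is a weakly acyclic language. -/

import Mathlib

/-- A DFA is *weakly acyclic* if whenever a nonempty word `w` loops on a state `q`,
every letter occurring in `w` self-loops on `q`. -/
def DFA.WeaklyAcyclic {α : Type*} {σ : Type*} (A : DFA α σ) : Prop :=
  ∀ (q : σ) (w : List α), w ≠ [] → A.evalFrom q w = q → ∀ a ∈ w, A.step q a = q

/-- A language is weakly acyclic if it is accepted by some weakly acyclic DFA
with finitely many states. -/
def Language.IsWeaklyAcyclic {α : Type*} (L : Language α) : Prop :=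
  ∃ (σ : Type) (_ : Fintype σ) (A : DFA α σ), A.WeaklyAcyclic ∧ A.accepts = L

/-- The residual of the language `L` with respect to the word `u`. -/
def Language.residual {α : Type*} (L : Language α) (u : List α) : Language α :=
  {v | u ++ v ∈ L}

/-!
An upward-closed language is the upward closure of its minimal words. These form an antichain
for the subword order, hence a finite set by Higman's lemma. The upward closure of a single
word `u` is recognised by the automaton that greedily matches `u`; its state, the length of the
matched prefix, never decreases along a run, so a word looping on a state cannot change it at
any letter. Weak acyclicity survives the product construction, which handles finite unions.
-/

universe u v

namespace DFA

variable {α : Type u} {σ σ' : Type v}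

theorem WeaklyAcyclic.of_le_step [PartialOrder σ] {M : DFA α σ} (h : ∀ q a, q ≤ M.step q a) :
    M.WeaklyAcyclic := by
  have le_evalFrom : ∀ q w, q ≤ M.evalFrom q w := by
    intro q w
    induction w generalizing q with
    | nil => exact le_rfl
    | cons a w ih => exact (h q a).trans (ih _)
  intro q w _ hloop a ha
  obtain ⟨s, t, rfl⟩ := List.append_of_mem ha
  set p := M.evalFrom q s
  have hqp : q ≤ p := le_evalFrom q s
  have hp : p ≤ M.step p a := h p a
  have hpq : M.step p a ≤ q := by
    rw [evalFrom_of_append, evalFrom_cons] at hloop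
    exact hloop ▸ le_evalFrom (M.step p a) t
  have hp_eq : p = q := le_antisymm (hp.trans hpq) hqp
  calc M.step q a = M.step p a := by rw [hp_eq]
    _ = q := le_antisymm hpq (hqp.trans hp)

theorem evalFrom_union (M₁ : DFA α σ) (M₂ : DFA α σ') (q : σ × σ') (w : List α) :
    (M₁.union M₂).evalFrom q w = (M₁.evalFrom q.1 w, M₂.evalFrom q.2 w) := by
  induction w generalizing q with
  | nil => rfl
  | cons a w ih => exact ih _

theorem WeaklyAcyclic.union {M₁ : DFA α σ} {M₂ : DFA α σ'} (h₁ : M₁.WeaklyAcyclic)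
    (h₂ : M₂.WeaklyAcyclic) : (M₁.union M₂).WeaklyAcyclic := by
  rintro ⟨p, q⟩ w hw hloop a ha
  rw [evalFrom_union, Prod.mk.injEq] at hloop
  exact Prod.ext (h₁ p w hw hloop.1 a ha) (h₂ q w hw hloop.2 a ha)

end DFA

namespace List

variable {α : Type*}

theorem partiallyWellOrderedOn_sublist [Finite α] (s : Set (List α)) :
    s.PartiallyWellOrderedOn Sublist := by
  have higman := (Set.finite_univ (α := α)).partiallyWellOrderedOn (r := (· = ·))
    |>.partiallyWellOrderedOn_sublistForall₂ (· = ·)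
  have hrel : SublistForall₂ (· = ·) = (Sublist : List α → List α → Prop) := by
    ext l₁ l₂
    simp [sublistForall₂_iff, forall₂_eq_eq_eq]
  rw [hrel] at higman
  exact higman.mono fun l _ x _ => Set.mem_univ x

def subwordDFA [DecidableEq α] (u : List α) : DFA α (Fin (u.length + 1)) where
  step k a := if u[(k : ℕ)]? = some a then ⟨min (k + 1) u.length, by omega⟩ else k
  start := 0
  accept := {Fin.last _}

variable [DecidableEq α] (u : List α)

theorem le_subwordDFA_step (k : Fin (u.length + 1)) (a : α) : k ≤ (subwordDFA u).step k a := by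
  simp only [subwordDFA]
  split_ifs
  · rw [Fin.le_def]
    simp only [le_inf_iff]
    omega
  · exact le_rfl

theorem subwordDFA_evalFrom_eq_last_iff (k : Fin (u.length + 1)) (w : List α) :
    (subwordDFA u).evalFrom k w = Fin.last _ ↔ u.drop k <+ w := by
  induction w generalizing k with
  | nil => simp [Fin.ext_iff, drop_eq_nil_iff, Nat.le_antisymm_iff, Nat.lt_succ_iff.mp k.2]
  | cons a w ih =>
    rw [DFA.evalFrom_cons, ih]
    obtain hk | hk := (Nat.lt_succ_iff.mp k.2).lt_or_eq
    · have hget : u[(k : ℕ)]? = some u[(k : ℕ)] := getElem?_eq_getElem hk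
      by_cases hb : u[(k : ℕ)] = a
      · have hstep : ((subwordDFA u).step k a : ℕ) = k + 1 := by
          simp [subwordDFA, hget, hb]
          omega
        rw [hstep, drop_eq_getElem_cons hk, hb, cons_sublist_cons]
      · have hstep : (subwordDFA u).step k a = k := by simp [subwordDFA, hget, hb]
        rw [hstep, drop_eq_getElem_cons hk, sublist_cons_iff]
        simp only [cons.injEq, hb, false_and, exists_false, or_false]
    · simp [subwordDFA, hk]

theorem subwordDFA_accepts : (subwordDFA u).accepts = {w | u <+ w} := by
  ext w
  exact subwordDFA_evalFrom_eq_last_iff u 0 w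

end List

namespace Language

variable {α : Type*}

theorem isWeaklyAcyclic_zero : (0 : Language α).IsWeaklyAcyclic :=
  ⟨Unit, inferInstance, ⟨fun _ _ => (), (), ∅⟩, fun _ _ _ _ _ _ => rfl, by
    ext w; simp [DFA.mem_accepts, notMem_zero]⟩

theorem IsWeaklyAcyclic.add {L₁ L₂ : Language α} (h₁ : L₁.IsWeaklyAcyclic)
    (h₂ : L₂.IsWeaklyAcyclic) : (L₁ + L₂).IsWeaklyAcyclic := by
  obtain ⟨σ₁, _, M₁, hM₁, rfl⟩ := h₁
  obtain ⟨σ₂, _, M₂, hM₂, rfl⟩ := h₂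
  exact ⟨σ₁ × σ₂, inferInstance, M₁.union M₂, hM₁.union hM₂, DFA.accepts_union M₁ M₂⟩

def upwardClosure (s : Set (List α)) : Language α :=
  {w | ∃ u ∈ s, u.Sublist w}

theorem upwardClosure_insert (u : List α) (s : Set (List α)) :
    upwardClosure (insert u s) = upwardClosure {u} + upwardClosure s := by
  ext w
  rw [mem_add]
  show (∃ v ∈ insert u s, v.Sublist w) ↔
    (∃ v ∈ ({u} : Set _), v.Sublist w) ∨ ∃ v ∈ s, v.Sublist w
  simp

theorem isWeaklyAcyclic_upwardClosure_singleton (u : List α) :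
    (upwardClosure {u}).IsWeaklyAcyclic := by
  classical
  refine ⟨_, inferInstance, u.subwordDFA, .of_le_step u.le_subwordDFA_step, ?_⟩
  rw [u.subwordDFA_accepts]
  ext w
  simp [upwardClosure]

theorem isWeaklyAcyclic_upwardClosure {s : Set (List α)} (hs : s.Finite) :
    (upwardClosure s).IsWeaklyAcyclic := by
  induction s, hs using Set.Finite.induction_on with
  | empty =>
    convert isWeaklyAcyclic_zero
    ext w
    simp [upwardClosure, zero_def]
  | @insert u s _ _ ih =>
    rw [upwardClosure_insert]
    exact (isWeaklyAcyclic_upwardClosure_singleton u).add ih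

theorem exists_finite_upwardClosure_eq [Finite α] {L : Language α}
    (hL : ∀ u v, u ∈ L → u.Sublist v → v ∈ L) :
    ∃ s : Set (List α), s.Finite ∧ upwardClosure s = L := by
  let minimals := {u | u ∈ L ∧ ∀ v ∈ L, v.Sublist u → v = u}
  have antichain : IsAntichain List.Sublist minimals :=
    fun u hu v hv hne huv => hne (hv.2 u hu.1 huv)
  refine ⟨minimals,
    antichain.finite_of_partiallyWellOrderedOn (List.partiallyWellOrderedOn_sublist _), ?_⟩
  ext w
  constructor
  · rintro ⟨u, hu, huw⟩
    exact hL u w hu.1 huw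
  · intro hw
    obtain ⟨u, ⟨huL, huw⟩, hmin⟩ :=
      (measure List.length).wf.has_min {u | u ∈ L ∧ u.Sublist w} ⟨w, hw, .refl w⟩
    refine ⟨u, ⟨huL, fun v hvL hvu => hvu.eq_of_length_le ?_⟩, huw⟩
    by_contra hlt
    exact hmin v ⟨hvL, hvu.trans huw⟩ (not_le.mp hlt)

end Language

/-- Every language that is upward-closed with respect to the (scattered) subword
order is weakly acyclic. -/
theorem upwardClosed_weaklyAcyclic {α : Type} [Fintype α] (L : Language α)
    (h : ∀ u v : List α, u ∈ L → u.Sublist v → v ∈ L) : L.IsWeaklyAcyclic := by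
  obtain ⟨s, hs, rfl⟩ := Language.exists_finite_upwardClosure_eq h
  exact Language.isWeaklyAcyclic_upwardClosure hs
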